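/- Distributivity of C_G over disjunction of negation-free propositional formulas (forwarding setting): For any φ₁, φ₂ built from atoms with only ∧ and ∨, any nonempty G ⊆ N, and H-compliant forwarding state (V,M), (V,M) ⊨_H C_G(φ₁ ∨ φ₂) iff (V,M) ⊨_H C_G φ₁ ∨ C_G φ₂. -/

import Mathlib

structure Msg (P A : Type) where
  sender : P
  grp : Set P
  fact : A

inductive Form (P A : Type) where
  | atom : A → Form P A
  | neg  : Form P A → Form P A
  | and  : Form P A → Form P A → Form P A
  | or   : Form P A → Form P A → Form P A
  | ck   : Set P → Form P A → Form P A

/-- The negation-free (positive) fragment L⁺. -/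
def Positive {P A : Type} : Form P A → Prop
  | .atom _ => True
  | .neg _ => False
  | .and φ ψ => Positive φ ∧ Positive ψ
  | .or φ ψ => Positive φ ∧ Positive ψ
  | .ck _ φ => Positive φ

/-- Atoms occurring in a formula. -/
def FactsF {P A : Type} : Form P A → Set A
  | .atom p => {p}
  | .neg φ => FactsF φ
  | .and φ ψ => FactsF φ ∪ FactsF ψ
  | .or φ ψ => FactsF φ ∪ FactsF ψ
  | .ck _ φ => FactsF φ

/-- Facts occurring in a set of messages. -/
def Facts {P A : Type} (M : Set (Msg P A)) : Set A := {p | ∃ m ∈ M, m.fact = p}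

/-- All messages are H-compliant. -/
def HComp {P A : Type} (H : Set (Set P)) (M : Set (Msg P A)) : Prop :=
  ∀ m ∈ M, m.grp ∈ H

/-- (j,B,p) ⤳ (i,A,p): p ∉ At_i and i ∈ B. -/
def leadsto {P A : Type} (owner : A → P) (m m' : Msg P A) : Prop :=
  m'.fact = m.fact ∧ owner m'.fact ≠ m'.sender ∧ m'.sender ∈ m.grp

/-- An explanation of a message m in (V,M): a non-circular ⤳-chain of
    p-messages in M starting at a player who initially knows p = m.fact
    and ending at m. -/
def Explains {P A : Type} (owner : A → P) (V : Set A) (M : Set (Msg P A))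
    (m : Msg P A) : Prop :=
  ∃ L : List (Msg P A),
    (∀ x ∈ L, x ∈ M) ∧
    List.Chain' (leadsto owner) L ∧
    (L.map Msg.sender).Nodup ∧
    (∀ x ∈ L, x.fact = m.fact) ∧
    (∃ m₀, L.head? = some m₀ ∧ owner m₀.fact = m₀.sender ∧ m₀.fact ∈ V) ∧
    L.getLast? = some m

/-- A forwarding state: every message has a sender in its group and an explanation. -/
def FwState {P A : Type} (owner : A → P) (V : Set A) (M : Set (Msg P A)) : Prop :=
  ∀ m ∈ M, m.sender ∈ m.grp ∧ Explains owner V M m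

/-- Indistinguishability for player i: equality of (V_i, M_i). -/
def indist {P A : Type} (owner : A → P) (i : P)
    (s t : Set A × Set (Msg P A)) : Prop :=
  {p ∈ s.1 | owner p = i} = {p ∈ t.1 | owner p = i} ∧
  {m ∈ s.2 | i ∈ m.grp} = {m ∈ t.2 | i ∈ m.grp}

/-- ∼_G: transitive closure of the union of the ∼_i, i ∈ G. -/
def reach {P A : Type} (owner : A → P) (G : Set P) :
    Set A × Set (Msg P A) → Set A × Set (Msg P A) → Prop :=
  Relation.TransGen (fun s t => ∃ i ∈ G, indist owner i s t)

/-- Semantics ⊨_H (forwarding setting): C_G quantifies over H-compliant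
    forwarding states. -/
def sat {P A : Type} (owner : A → P) (H : Set (Set P)) :
    Form P A → Set A → Set (Msg P A) → Prop
  | .atom p, V, _ => p ∈ V
  | .neg φ, V, M => ¬ sat owner H φ V M
  | .and φ ψ, V, M => sat owner H φ V M ∧ sat owner H ψ V M
  | .or φ ψ, V, M => sat owner H φ V M ∨ sat owner H ψ V M
  | .ck G φ, V, M => ∀ V' M', FwState owner V' M' → HComp H M' →
      reach owner G (V, M) (V', M') → sat owner H φ V' M'

/-- The complete hypergraph: all nonempty subsets of players. -/
def completeH (P : Type) : Set (Set P) := {B | B.Nonempty}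

/-- Negation-free propositional formulas (atoms, ∧, ∨ only). -/
def PropPos {P A : Type} : Form P A → Prop
  | .atom _ => True
  | .and φ ψ => PropPos φ ∧ PropPos ψ
  | .or φ ψ => PropPos φ ∧ PropPos ψ
  | _ => False

/-!
Adding the members of the finite group `G` one at a time and each time discarding what the new
member cannot see, one walks along `∼_G` from `(V, M)` to a forwarding state that keeps only the
facts owned by all of `G`, the messages addressed to supersets of `G`, and the messages on their
explanations. Both kinds of retained facts survive in every `∼_G`-reachable forwarding state (the
first are seen by all of `G` at each step, the second are facts of messages seen by all of `G`,
and facts of messages are true). So this state has the fewest true atoms among the reachable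
states, and a positive propositional formula, being monotone in the atoms and blind to messages,
holds at every reachable state once it holds there.
-/

section Forwarding

variable {P A : Type} {owner : A → P}

theorem PropPos.sat_mono {H : Set (Set P)} {φ : Form P A} (hφ : PropPos φ) {V V' : Set A}
    {M M' : Set (Msg P A)} (hV : V ⊆ V') (h : sat owner H φ V M) : sat owner H φ V' M' := by
  induction φ with
  | atom p => exact hV h
  | neg => exact hφ.elim
  | and φ ψ ihφ ihψ => exact ⟨ihφ hφ.1 h.1, ihψ hφ.2 h.2⟩
  | or φ ψ ihφ ihψ => exact h.imp (ihφ hφ.1) (ihψ hφ.2)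
  | ck => exact hφ.elim

def IsExplanation (owner : A → P) (V : Set A) (M : Set (Msg P A)) (m : Msg P A)
    (L : List (Msg P A)) : Prop :=
  (∀ x ∈ L, x ∈ M) ∧
  L.IsChain (leadsto owner) ∧
  (L.map Msg.sender).Nodup ∧
  (∀ x ∈ L, x.fact = m.fact) ∧
  (∃ m₀, L.head? = some m₀ ∧ owner m₀.fact = m₀.sender ∧ m₀.fact ∈ V) ∧
  L.getLast? = some m

theorem explains_iff_exists_isExplanation {V : Set A} {M : Set (Msg P A)} {m : Msg P A} :
    Explains owner V M m ↔ ∃ L, IsExplanation owner V M m L :=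
  Iff.rfl

namespace IsExplanation

variable {V V' : Set A} {M M' : Set (Msg P A)} {m x : Msg P A} {L : List (Msg P A)}

theorem mem_self (hL : IsExplanation owner V M m L) : m ∈ L :=
  List.mem_of_getLast? hL.2.2.2.2.2

theorem fact_mem (hL : IsExplanation owner V M m L) : m.fact ∈ V := by
  obtain ⟨-, -, -, hfact, ⟨m₀, hhead, -, hm₀⟩, -⟩ := hL
  rwa [← hfact m₀ (List.mem_of_mem_head? hhead)]

theorem mono (hL : IsExplanation owner V M m L) (hM : ∀ y ∈ L, y ∈ M') (hV : m.fact ∈ V') :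
    IsExplanation owner V' M' m L := by
  obtain ⟨-, hchain, hnodup, hfact, ⟨m₀, hhead, hown, -⟩, hlast⟩ := hL
  refine ⟨hM, hchain, hnodup, hfact, ⟨m₀, hhead, hown, ?_⟩, hlast⟩
  rwa [hfact m₀ (List.mem_of_mem_head? hhead)]

theorem exists_prefix (hL : IsExplanation owner V M m L) (hx : x ∈ L) :
    ∃ L', L' <+: L ∧ IsExplanation owner V M x L' := by
  obtain ⟨hM, hchain, hnodup, hfact, ⟨m₀, hhead, hown, hm₀⟩, -⟩ := hL
  obtain ⟨l₁, l₂, rfl⟩ := List.append_of_mem hx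
  have hpre : l₁ ++ [x] <+: l₁ ++ x :: l₂ := ⟨l₂, by simp⟩
  have hsub := hpre.sublist
  refine ⟨l₁ ++ [x], hpre, fun y hy => hM y (hsub.mem hy), hchain.prefix hpre,
    hnodup.sublist (hsub.map _), fun y hy => ?_, ⟨m₀, ?_, hown, hm₀⟩, List.getLast?_concat⟩
  · rw [hfact y (hsub.mem hy), hfact x hx]
  · rw [← hhead]; cases l₁ <;> rfl

end IsExplanation

theorem FwState.fact_mem {V : Set A} {M : Set (Msg P A)} (hS : FwState owner V M)
    {m : Msg P A} (hm : m ∈ M) : m.fact ∈ V :=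
  let ⟨_, hL⟩ := explains_iff_exists_isExplanation.mp (hS m hm).2
  hL.fact_mem

def explanationMsgs (owner : A → P) (V : Set A) (M N : Set (Msg P A)) : Set (Msg P A) :=
  {x | ∃ m ∈ N, ∃ L, IsExplanation owner V M m L ∧ x ∈ L}

section ExplanationMsgs

variable {V V' : Set A} {M N : Set (Msg P A)}

theorem explanationMsgs_subset : explanationMsgs owner V M N ⊆ M :=
  fun _ ⟨_, _, _, hL, hx⟩ => hL.1 _ hx

theorem subset_explanationMsgs (hS : FwState owner V M) (hN : N ⊆ M) :
    N ⊆ explanationMsgs owner V M N := fun m hm =>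
  let ⟨L, hL⟩ := explains_iff_exists_isExplanation.mp (hS m (hN hm)).2
  ⟨m, hm, L, hL, hL.mem_self⟩

theorem fwState_explanationMsgs (hS : FwState owner V M) (hV : Facts N ⊆ V') :
    FwState owner V' (explanationMsgs owner V M N) := by
  rintro x hx
  obtain ⟨m, hm, L, hL, hxL⟩ := hx
  obtain ⟨L', hpre, hL'⟩ := hL.exists_prefix hxL
  refine ⟨(hS x (hL.1 x hxL)).1, L', hL'.mono (fun y hy => ⟨m, hm, L, hL, hpre.subset hy⟩) ?_⟩
  rw [hL.2.2.2.1 x hxL]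
  exact hV ⟨m, hm, rfl⟩

end ExplanationMsgs

def visibleFacts (owner : A → P) (G : Set P) (V : Set A) : Set A :=
  {p ∈ V | ∀ i ∈ G, owner p = i}

def visibleMsgs (G : Set P) (M : Set (Msg P A)) : Set (Msg P A) :=
  {m ∈ M | G ⊆ m.grp}

section Visible

variable {G : Set P} {s t : Set A × Set (Msg P A)}

theorem visible_subset_of_indist {i : P} (hi : i ∈ G) (h : indist owner i s t) :
    visibleFacts owner G s.1 ⊆ visibleFacts owner G t.1 ∧ visibleMsgs G s.2 ⊆ visibleMsgs G t.2 :=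
  ⟨fun _ hp => ⟨(h.1.subset ⟨hp.1, hp.2 i hi⟩).1, hp.2⟩,
    fun _ hm => ⟨(h.2.subset ⟨hm.1, hm.2 hi⟩).1, hm.2⟩⟩

theorem visible_subset_of_reach (h : reach owner G s t) :
    visibleFacts owner G s.1 ⊆ visibleFacts owner G t.1 ∧ visibleMsgs G s.2 ⊆ visibleMsgs G t.2 := by
  induction h with
  | single h =>
    obtain ⟨i, hi, h⟩ := h
    exact visible_subset_of_indist hi h
  | tail _ h ih =>
    obtain ⟨i, hi, h⟩ := h
    have := visible_subset_of_indist hi h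
    exact ⟨ih.1.trans this.1, ih.2.trans this.2⟩

end Visible

def restrictState (owner : A → P) (V F : Set A) (M E : Set (Msg P A)) (s : Set P) :
    Set A × Set (Msg P A) :=
  (visibleFacts owner s V ∪ F, visibleMsgs s M ∪ E)

section RestrictState

variable {V F : Set A} {M E : Set (Msg P A)}

theorem restrictState_empty (hF : F ⊆ V) (hE : E ⊆ M) :
    restrictState owner V F M E ∅ = (V, M) := by
  simp [restrictState, visibleFacts, visibleMsgs, hF, hE]

theorem indist_restrictState_insert (i : P) (s : Set P) :
    indist owner i (restrictState owner V F M E s) (restrictState owner V F M E (insert i s)) := by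
  constructor <;> ext <;>
    simp +contextual [restrictState, visibleFacts, visibleMsgs, Set.insert_subset_iff]

theorem reach_restrictState [Finite P] {G : Set P} (hG : G.Nonempty) (hF : F ⊆ V) (hE : E ⊆ M) :
    reach owner G (V, M) (restrictState owner V F M E G) := by
  have hchain : ∀ s ⊆ G, Relation.ReflTransGen (fun a b => ∃ i ∈ G, indist owner i a b)
      (V, M) (restrictState owner V F M E s) := by
    intro s hs
    induction s, s.toFinite using Set.Finite.induction_on with
    | empty => rw [restrictState_empty hF hE]
    | @insert i s _ _ ih =>
      exact (ih ((Set.subset_insert i s).trans hs)).tail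
        ⟨i, hs (Set.mem_insert i s), indist_restrictState_insert i s⟩
  obtain ⟨i, hi⟩ := hG
  exact .head' ⟨i, hi, rfl, rfl⟩ (hchain G le_rfl)

end RestrictState

theorem exists_reach_facts_minimal [Finite P] {H : Set (Set P)} {V : Set A} {M : Set (Msg P A)}
    (hS : FwState owner V M) (hC : HComp H M) {G : Set P} (hG : G.Nonempty) :
    ∃ V₀ M₀, FwState owner V₀ M₀ ∧ HComp H M₀ ∧ reach owner G (V, M) (V₀, M₀) ∧
      ∀ V' M', FwState owner V' M' → reach owner G (V, M) (V', M') → V₀ ⊆ V' := by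
  set N := visibleMsgs G M
  have hNM : N ⊆ M := Set.sep_subset _ _
  have hNV : Facts N ⊆ V := by
    rintro _ ⟨m, hm, rfl⟩
    exact hS.fact_mem (hNM hm)
  have hunion : N ∪ explanationMsgs owner V M N = explanationMsgs owner V M N :=
    Set.union_eq_right.mpr (subset_explanationMsgs hS hNM)
  refine ⟨visibleFacts owner G V ∪ Facts N, N ∪ explanationMsgs owner V M N, ?_,
    fun m hm => hC m (Set.union_subset hNM explanationMsgs_subset hm),
    reach_restrictState hG hNV explanationMsgs_subset, ?_⟩
  · rw [hunion]
    exact fwState_explanationMsgs hS Set.subset_union_right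
  · intro V' M' hS' hr
    have hvis := visible_subset_of_reach hr
    rintro p (hp | ⟨m, hm, rfl⟩)
    · exact (hvis.1 hp).1
    · exact hS'.fact_mem (hvis.2 hm).1

end Forwarding

theorem fw_ck_distributes_over_prop_disjunction {P A : Type} [Fintype P]
    (owner : A → P) (H : Set (Set P)) (V : Set A) (M : Set (Msg P A))
    (hS : FwState owner V M) (hC : HComp H M)
    (G : Set P) (hG : G.Nonempty)
    (φ₁ φ₂ : Form P A) (h₁ : PropPos φ₁) (h₂ : PropPos φ₂) :
    sat owner H (.ck G (.or φ₁ φ₂)) V M ↔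
      sat owner H (.ck G φ₁) V M ∨ sat owner H (.ck G φ₂) V M := by
  obtain ⟨V₀, M₀, hS₀, hC₀, hr₀, hmin⟩ := exists_reach_facts_minimal hS hC hG
  constructor
  · intro h
    exact (h V₀ M₀ hS₀ hC₀ hr₀).imp
      (fun h₀ V' M' hS' _ hr => h₁.sat_mono (hmin V' M' hS' hr) h₀)
      (fun h₀ V' M' hS' _ hr => h₂.sat_mono (hmin V' M' hS' hr) h₀)
  · rintro (h | h) V' M' hS' hC' hr
    exacts [.inl (h V' M' hS' hC' hr), .inr (h V' M' hS' hC' hr)]
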